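/- The scalar smooth Huber-type cost f(x) = (y - x)²/(|y - x| + β) + γx² with β > 0, γ > 0 and fixed y ∈ ℝ is C¹ on ℝ and strictly convex. -/

import Mathlib

/-!
The loss `t ↦ t² / (|t| + β)` is differentiable: away from `0` by the quotient rule, and at `0`
because both the loss and its candidate derivative `t (|t| + 2β) / (|t| + β)²` are continuous there.
That derivative is continuous and monotone, so the derivative of `f` is continuous and, once the
term `2γx` is added, strictly increasing. Hence `f` is `C¹` and strictly convex.
-/

section SmoothHuber

variable {β : ℝ}

noncomputable def smoothHuber (β t : ℝ) : ℝ := t ^ 2 / (|t| + β)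

noncomputable def smoothHuberDeriv (β t : ℝ) : ℝ := t * (|t| + 2 * β) / (|t| + β) ^ 2

theorem continuous_smoothHuber (hβ : 0 < β) : Continuous (smoothHuber β) := by
  unfold smoothHuber
  fun_prop (disch := intro; positivity)

theorem continuous_smoothHuberDeriv (hβ : 0 < β) : Continuous (smoothHuberDeriv β) := by
  unfold smoothHuberDeriv
  fun_prop (disch := intro; positivity)

theorem hasDerivAt_smoothHuber_of_ne_zero (hβ : 0 < β) {t : ℝ} (ht : t ≠ 0) :
    HasDerivAt (smoothHuber β) (smoothHuberDeriv β t) t := by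
  have hden : |t| + β ≠ 0 := by positivity
  refine ((hasDerivAt_pow 2 t).div ((hasDerivAt_abs ht).add_const β) hden).congr_deriv ?_
  rw [smoothHuberDeriv, ← self_mul_sign t]
  field_simp
  ring

theorem hasDerivAt_smoothHuber (hβ : 0 < β) (t : ℝ) :
    HasDerivAt (smoothHuber β) (smoothHuberDeriv β t) t :=
  hasDerivAt_of_hasDerivAt_of_ne' (fun _ hs => hasDerivAt_smoothHuber_of_ne_zero hβ hs)
    (continuous_smoothHuber hβ).continuousAt (continuous_smoothHuberDeriv hβ).continuousAt t

theorem monotone_smoothHuberDeriv (hβ : 0 < β) : Monotone (smoothHuberDeriv β) := by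
  intro s t hst
  rw [smoothHuberDeriv, smoothHuberDeriv, div_le_div_iff₀ (by positivity) (by positivity)]
  have hββ : 0 ≤ β * β * (t - s) := by have := sub_nonneg.2 hst; positivity
  rcases abs_cases s with ⟨hs, hs0⟩ | ⟨hs, hs0⟩ <;>
    rcases abs_cases t with ⟨ht, ht0⟩ | ⟨ht, ht0⟩ <;> rw [hs, ht]
  · nlinarith [mul_nonneg (mul_nonneg hs0 ht0) (sub_nonneg.2 hst)]
  · linarith
  · have hs' : 0 ≤ -s * (-s + 2 * β) * (t + β) ^ 2 :=
      mul_nonneg (mul_nonneg (by linarith) (by linarith)) (sq_nonneg _)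
    have ht' : 0 ≤ t * (t + 2 * β) * (-s + β) ^ 2 := by positivity
    linarith
  · nlinarith [mul_nonneg (mul_nonneg (neg_nonneg.2 hs0.le) (neg_nonneg.2 ht0.le))
      (sub_nonneg.2 hst)]

end SmoothHuber

theorem stmt15 (β γ y : ℝ) (hβ : 0 < β) (hγ : 0 < γ) :
    ContDiff ℝ 1 (fun x : ℝ => (y - x) ^ 2 / (|y - x| + β) + γ * x ^ 2) ∧
    StrictConvexOn ℝ Set.univ (fun x : ℝ => (y - x) ^ 2 / (|y - x| + β) + γ * x ^ 2) := by
  set f : ℝ → ℝ := fun x => smoothHuber β (y - x) + γ * x ^ 2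
  set f' : ℝ → ℝ := fun x => -smoothHuberDeriv β (y - x) + 2 * γ * x
  show ContDiff ℝ 1 f ∧ StrictConvexOn ℝ Set.univ f
  have hf : ∀ x, HasDerivAt f (f' x) x := fun x =>
    (((hasDerivAt_smoothHuber hβ (y - x)).comp x ((hasDerivAt_id x).const_sub y)).add
      ((hasDerivAt_pow 2 x).const_mul γ)).congr_deriv (by ring)
  have hderiv : deriv f = f' := funext fun x => (hf x).deriv
  have hloss_mono : Monotone fun x => -smoothHuberDeriv β (y - x) := fun a b hab =>
    neg_le_neg (monotone_smoothHuberDeriv hβ (sub_le_sub_left hab y))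
  have hf'_mono : StrictMono f' :=
    hloss_mono.add_strictMono (strictMono_mul_left_of_pos (by positivity))
  have hf'_cont : Continuous f' := by
    have := continuous_smoothHuberDeriv hβ
    fun_prop
  have hf_diff : Differentiable ℝ f := fun x => (hf x).differentiableAt
  exact ⟨contDiff_one_iff_deriv.2 ⟨hf_diff, hderiv ▸ hf'_cont⟩,
    (hderiv ▸ hf'_mono).strictConvexOn_univ_of_deriv hf_diff.continuous⟩
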